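/- Let q, k, M be nonzero vectors in ℝⁿ with CosSim(k, q) = β > 0 and CosSim(M, k) = α < 0. Then CosSim(M, q) ≤ 1 - (α - β)²/2 < 1 - β²/2. -/

import Mathlib

/-! Cosine similarity is the cosine of the unoriented angle, junk values included: for a zero
vector both sides are `0`. By the triangle inequality for angles, `∠(M, q) ≥ |∠(M, k) - ∠(k, q)|`,
and since `cos` is antitone on `[0, π]`, `cos ∠(M, q) ≤ cos (a - b) = cos a cos b + sin a sin b`
with `a = ∠(M, k)`, `b = ∠(k, q)`. AM-GM on `sin a sin b` turns this into `1 - (α - β)² / 2`,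
and `|α - β| > β` because `α` and `β` have opposite signs. -/

open InnerProductGeometry Real

noncomputable def cosSim {n : ℕ} (u v : EuclideanSpace ℝ (Fin n)) : ℝ :=
  (inner ℝ u v : ℝ) / (‖u‖ * ‖v‖)

theorem Real.cos_sub_le_one_sub_sq_sub_div_two (a b : ℝ) :
    cos (a - b) ≤ 1 - (cos a - cos b) ^ 2 / 2 := by
  rw [cos_sub]
  nlinarith [sq_nonneg (sin a - sin b), sin_sq_add_cos_sq a, sin_sq_add_cos_sq b]

section InnerProductSpace

variable {V : Type*} [NormedAddCommGroup V] [InnerProductSpace ℝ V]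

theorem InnerProductGeometry.abs_angle_sub_angle_le (x y z : V) :
    |angle x y - angle y z| ≤ angle x z := by
  have hxy := angle_le_angle_add_angle x z y
  have hyz := angle_le_angle_add_angle y x z
  rw [angle_comm z y] at hxy
  rw [angle_comm y x] at hyz
  exact abs_sub_le_iff.mpr ⟨by linarith, by linarith⟩

theorem InnerProductGeometry.cos_angle_le_one_sub_sq_sub_div_two (x y z : V) :
    cos (angle x z) ≤ 1 - (cos (angle x y) - cos (angle y z)) ^ 2 / 2 :=
  calc cos (angle x z)
      ≤ cos |angle x y - angle y z| :=
        cos_le_cos_of_nonneg_of_le_pi (abs_nonneg _) (angle_le_pi x z)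
          (abs_angle_sub_angle_le x y z)
    _ = cos (angle x y - angle y z) := cos_abs _
    _ ≤ 1 - (cos (angle x y) - cos (angle y z)) ^ 2 / 2 :=
        cos_sub_le_one_sub_sq_sub_div_two _ _

end InnerProductSpace

theorem cosSim_eq_cos_angle {n : ℕ} (u v : EuclideanSpace ℝ (Fin n)) :
    cosSim u v = cos (angle u v) :=
  (cos_angle u v).symm

theorem cosSim_le_one_sub_sq_sub_div_two {n : ℕ} (u v w : EuclideanSpace ℝ (Fin n)) :
    cosSim u w ≤ 1 - (cosSim u v - cosSim v w) ^ 2 / 2 := by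
  simpa only [cosSim_eq_cos_angle] using cos_angle_le_one_sub_sq_sub_div_two u v w

theorem stmt16_general {n : ℕ} (q k M : EuclideanSpace ℝ (Fin n))
    (α β : ℝ)
    (hβ : cosSim k q = β) (hβpos : 0 < β)
    (hα : cosSim M k = α) (hαneg : α < 0) :
    cosSim M q ≤ 1 - (α - β) ^ 2 / 2 ∧ 1 - (α - β) ^ 2 / 2 < 1 - β ^ 2 / 2 := by
  refine ⟨hα ▸ hβ ▸ cosSim_le_one_sub_sq_sub_div_two M k q, ?_⟩
  have hsq : β ^ 2 < (α - β) ^ 2 := by nlinarith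
  linarith

theorem stmt16 {n : ℕ} (q k M : EuclideanSpace ℝ (Fin n))
    (hq : q ≠ 0) (hk : k ≠ 0) (hM : M ≠ 0) (α β : ℝ)
    (hβ : cosSim k q = β) (hβpos : 0 < β)
    (hα : cosSim M k = α) (hαneg : α < 0) :
    cosSim M q ≤ 1 - (α - β) ^ 2 / 2 ∧ 1 - (α - β) ^ 2 / 2 < 1 - β ^ 2 / 2 :=
  stmt16_general q k M α β hβ hβpos hα hαneg
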